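/- arXiv:2004.01977 — 6 statements merged into one kernel-verified Lean document; each statement's English description precedes it below -/
import Mathlib

section
/- Descent of the augmented Lagrangian over one ADMM inner iteration (Lemma 1): Assume g is convex, X̄ is convex, β > 0, ρ = 2β, and λ + βz + y = 0. If (x⁺, x̄⁺, z⁺, y⁺) is produced from (x, x̄, z, y) (with x ∈ X, x̄ ∈ X̄) by one ADMM inner iteration, then L(x⁺, x̄⁺, z⁺; y⁺) ≤ L(x, x̄, z; y) − β‖Bx̄⁺ − Bx̄‖² − (β/2)‖z⁺ − z‖². -/
open scoped RealInnerProductSpace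

variable {E F P : Type*}
  [NormedAddCommGroup E] [InnerProductSpace ℝ E] [FiniteDimensional ℝ E]
  [NormedAddCommGroup F] [InnerProductSpace ℝ F] [FiniteDimensional ℝ F]
  [NormedAddCommGroup P] [InnerProductSpace ℝ P] [FiniteDimensional ℝ P]

/-- The augmented Lagrangian
`L(x, x̄, z; y) = f(x) + g(x̄) + ⟨y, Ax + Bx̄ + z⟩ + (ρ/2)‖Ax + Bx̄ + z‖² + ⟨λ, z⟩ + (β/2)‖z‖²`. -/
noncomputable def augL (A : E →L[ℝ] P) (B : F →L[ℝ] P) (f : E → ℝ) (g : F → ℝ)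
    (lam : P) (ρ β : ℝ) (x : E) (xb : F) (z y : P) : ℝ :=
  f x + g xb + ⟪y, A x + B xb + z⟫ + ρ / 2 * ‖A x + B xb + z‖ ^ 2
    + ⟪lam, z⟫ + β / 2 * ‖z‖ ^ 2

/-- One ADMM inner iteration mapping `(x, x̄, z, y)` to `(x⁺, x̄⁺, z⁺, y⁺)`:
`x⁺` minimizes `x′ ↦ f(x′) + (ρ/2)‖Ax′ + Bx̄ + z + y/ρ‖²` over `X`;
`x̄⁺` minimizes `x̄′ ↦ g(x̄′) + (ρ/2)‖Ax⁺ + Bx̄′ + z + y/ρ‖²` over `X̄`;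
`z⁺ = −(ρ/(ρ+β))(Ax⁺ + Bx̄⁺ + y/ρ) − λ/(ρ+β)`; `y⁺ = y + ρ(Ax⁺ + Bx̄⁺ + z⁺)`. -/
def ADMMStep (A : E →L[ℝ] P) (B : F →L[ℝ] P) (f : E → ℝ) (g : F → ℝ)
    (X : Set E) (Xb : Set F) (lam : P) (ρ β : ℝ)
    (xb : F) (z y : P) (xp : E) (xbp : F) (zp yp : P) : Prop :=
  xp ∈ X ∧
  IsMinOn (fun x' : E => f x' + ρ / 2 * ‖A x' + B xb + z + ρ⁻¹ • y‖ ^ 2) X xp ∧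
  xbp ∈ Xb ∧
  IsMinOn (fun xb' : F => g xb' + ρ / 2 * ‖A xp + B xb' + z + ρ⁻¹ • y‖ ^ 2) Xb xbp ∧
  zp = -((ρ / (ρ + β)) • (A xp + B xbp + ρ⁻¹ • y)) - (ρ + β)⁻¹ • lam ∧
  yp = y + ρ • (A xp + B xbp + zp)

lemma complete_sq (ρ : ℝ) (hρ : ρ ≠ 0) (y r : P) :
    ⟪y, r⟫ + ρ / 2 * ‖r‖ ^ 2 = ρ / 2 * ‖r + ρ⁻¹ • y‖ ^ 2 - ρ⁻¹ / 2 * ‖y‖ ^ 2 := by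
  have h := norm_add_sq_real r (ρ⁻¹ • y)
  rw [real_inner_smul_right, norm_smul, Real.norm_eq_abs, mul_pow, sq_abs] at h
  rw [real_inner_comm, h]
  field_simp
  ring

lemma strong_min (B : F →L[ℝ] P) (g : F → ℝ) (Xb : Set F)
    (hg : ConvexOn ℝ Set.univ g) (hXb : Convex ℝ Xb) (ρ : ℝ) (hρ : 0 < ρ) (c : P)
    (xbp xb : F) (hxbp : xbp ∈ Xb) (hxb : xb ∈ Xb)
    (hmin : IsMinOn (fun x' : F => g x' + ρ / 2 * ‖c + B x'‖ ^ 2) Xb xbp) :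
    g xbp + ρ / 2 * ‖c + B xbp‖ ^ 2 ≤
      g xb + ρ / 2 * ‖c + B xb‖ ^ 2 - ρ / 2 * ‖B xb - B xbp‖ ^ 2 := by
  set d : P := B xb - B xbp with hd
  have key : g xbp ≤ g xb + ρ * ⟪c + B xbp, d⟫ := by
    apply le_of_forall_pos_le_add
    intro ε hε
    set M : ℝ := ρ / 2 * ‖d‖ ^ 2 with hM
    have hM0 : 0 ≤ M := by positivity
    set t : ℝ := min 1 (ε / (M + 1)) with ht
    have ht0 : 0 < t := lt_min one_pos (by positivity)
    have ht1 : t ≤ 1 := min_le_left _ _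
    have htM : t * M ≤ ε := by
      have h1 : t ≤ ε / (M + 1) := min_le_right _ _
      have : t * (M + 1) ≤ ε := by
        rw [← le_div_iff₀ (by positivity)]; exact h1
      nlinarith
    set w : F := (1 - t) • xbp + t • xb with hw
    have hwXb : w ∈ Xb := hXb hxbp hxb (by linarith) (le_of_lt ht0) (by ring)
    have h1 : g xbp + ρ / 2 * ‖c + B xbp‖ ^ 2 ≤ g w + ρ / 2 * ‖c + B w‖ ^ 2 :=
      hmin hwXb
    have hgw : g w ≤ (1 - t) * g xbp + t * g xb :=
      hg.2 (Set.mem_univ xbp) (Set.mem_univ xb) (by linarith) (le_of_lt ht0) (by ring)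
    have hBw : c + B w = (c + B xbp) + t • d := by
      simp only [hw, hd, map_add, map_smul, map_sub]
      module
    have hnorm : ‖c + B w‖ ^ 2 =
        ‖c + B xbp‖ ^ 2 + 2 * (t * ⟪c + B xbp, d⟫) + t ^ 2 * ‖d‖ ^ 2 := by
      rw [hBw, norm_add_sq_real, real_inner_smul_right, norm_smul, Real.norm_eq_abs,
        mul_pow, sq_abs]
    have h2 : t * g xbp ≤ t * g xb + t * (ρ * ⟪c + B xbp, d⟫) + t ^ 2 * M := by
      rw [hnorm] at h1
      nlinarith
    nlinarith
  have hexp : ‖c + B xb‖ ^ 2 =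
      ‖c + B xbp‖ ^ 2 + 2 * ⟪c + B xbp, d⟫ + ‖d‖ ^ 2 := by
    have h : c + B xb = (c + B xbp) + d := by rw [hd]; abel
    rw [h, norm_add_sq_real]
  nlinarith

/-- Lemma 1 (descent of the augmented Lagrangian over one ADMM inner iteration). -/
theorem augL_descent_of_ADMMStep
    (A : E →L[ℝ] P) (B : F →L[ℝ] P) (f : E → ℝ) (g : F → ℝ)
    (X : Set E) (Xb : Set F) (lam : P) (ρ β : ℝ)
    (hg : ConvexOn ℝ Set.univ g) (hXb : Convex ℝ Xb)
    (hβ : 0 < β) (hρ : ρ = 2 * β)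
    (x : E) (xb : F) (z y : P) (xp : E) (xbp : F) (zp yp : P)
    (hx : x ∈ X) (hxb : xb ∈ Xb)
    (hy : lam + β • z + y = 0)
    (hstep : ADMMStep A B f g X Xb lam ρ β xb z y xp xbp zp yp) :
    augL A B f g lam ρ β xp xbp zp yp ≤
      augL A B f g lam ρ β x xb z y
        - β * ‖B xbp - B xb‖ ^ 2 - β / 2 * ‖zp - z‖ ^ 2 := by
  obtain ⟨hxpX, hminx, hxbpXb, hminxb, hzp, hyp⟩ := hstep
  subst hρ
  have hρ0 : (2 : ℝ) * β ≠ 0 := by positivity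
  have hρpos : (0 : ℝ) < 2 * β := by positivity
  have hlam : lam = -(β • z) - y := by
    have h : lam = -(β • z + y) := by
      rwa [add_assoc, add_eq_zero_iff_eq_neg] at hy
    rw [h]; abel
  -- Step A
  have stepA : augL A B f g lam (2*β) β xp xb z y ≤ augL A B f g lam (2*β) β x xb z y := by
    have hA := isMinOn_iff.mp hminx x hx
    have e1 := complete_sq (P := P) (2*β) hρ0 y (A xp + B xb + z)
    have e2 := complete_sq (P := P) (2*β) hρ0 y (A x + B xb + z)
    simp only [augL]
    linarith
  -- Step B
  have stepB : augL A B f g lam (2*β) β xp xbp z y ≤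
      augL A B f g lam (2*β) β xp xb z y - β * ‖B xbp - B xb‖ ^ 2 := by
    have hfun : (fun xb' : F => g xb' + (2*β) / 2 * ‖A xp + B xb' + z + (2*β)⁻¹ • y‖ ^ 2)
        = (fun xb' : F => g xb' + (2*β) / 2 * ‖(A xp + z + (2*β)⁻¹ • y) + B xb'‖ ^ 2) := by
      funext xb'
      congr 2
      abel
    rw [hfun] at hminxb
    have hsm := strong_min B g Xb hg hXb (2*β) hρpos (A xp + z + (2*β)⁻¹ • y)
      xbp xb hxbpXb hxb hminxb
    have e1 := complete_sq (P := P) (2*β) hρ0 y (A xp + B xbp + z)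
    have e2 := complete_sq (P := P) (2*β) hρ0 y (A xp + B xb + z)
    have r1 : (A xp + z + (2*β)⁻¹ • y) + B xbp = (A xp + B xbp + z) + (2*β)⁻¹ • y := by abel
    have r2 : (A xp + z + (2*β)⁻¹ • y) + B xb = (A xp + B xb + z) + (2*β)⁻¹ • y := by abel
    rw [r1, r2] at hsm
    have hrev : ‖B xb - B xbp‖ = ‖B xbp - B xb‖ := norm_sub_rev _ _
    rw [hrev] at hsm
    simp only [augL]
    nlinarith
  -- Step C
  have stepC : augL A B f g lam (2*β) β xp xbp zp yp ≤
      augL A B f g lam (2*β) β xp xbp z y - β / 2 * ‖zp - z‖ ^ 2 := by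
    set s : P := A xp + B xbp + z with hs
    have h3β : (2*β + β) ≠ 0 := by positivity
    have hz' : zp = z - (2/3 : ℝ) • s := by
      rw [hzp, hlam, hs]
      match_scalars <;> field_simp <;> ring
    have hu : A xp + B xbp + zp = (1/3 : ℝ) • s := by
      rw [hz', hs]
      module
    have hy' : yp = y + (2*β/3) • s := by
      rw [hyp, hu]
      match_scalars <;> field_simp <;> ring
    have hzz : zp - z = -((2/3 : ℝ) • s) := by rw [hz']; abel
    simp only [augL]
    rw [hu, hy', hzz, hz', hlam, ← hs]
    simp only [← real_inner_self_eq_norm_sq]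
    simp only [inner_add_left, inner_add_right, inner_sub_left, inner_sub_right,
      inner_smul_left, inner_smul_right, inner_neg_left, inner_neg_right,
      RCLike.ofReal_real_eq_id, id_eq, conj_trivial]
    have c1 : ⟪s, y⟫ = ⟪y, s⟫ := real_inner_comm _ _
    have c2 : ⟪s, z⟫ = ⟪z, s⟫ := real_inner_comm _ _
    have c3 : ⟪y, z⟫ = ⟪z, y⟫ := real_inner_comm _ _
    nlinarith [mul_nonneg hβ.le (real_inner_self_nonneg (x := s))]
  linarith
end

section
/- Descent from the z- and y-updates (inequality (A1.3)): Assume β > 0, ρ = 2β, and λ + βz + y = 0. Let x⁺ ∈ X, x̄⁺ ∈ X̄, define z⁺ = −(ρ/(ρ+β))(Ax⁺ + Bx̄⁺ + y/ρ) − λ/(ρ+β) and y⁺ = y + ρ(Ax⁺ + Bx̄⁺ + z⁺). Then L(x⁺, x̄⁺, z⁺; y⁺) − L(x⁺, x̄⁺, z; y) ≤ −(β/2)‖z⁺ − z‖². -/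
open scoped RealInnerProductSpace

variable {E F P : Type*}
  [NormedAddCommGroup E] [InnerProductSpace ℝ E] [FiniteDimensional ℝ E]
  [NormedAddCommGroup F] [InnerProductSpace ℝ F] [FiniteDimensional ℝ F]
  [NormedAddCommGroup P] [InnerProductSpace ℝ P] [FiniteDimensional ℝ P]

/-- Descent from the z- and y-updates (inequality (A1.3)). -/
theorem zy_update_descent
    (A : E →L[ℝ] P) (B : F →L[ℝ] P) (f : E → ℝ) (g : F → ℝ)
    (X : Set E) (Xb : Set F) (lam : P) (ρ β : ℝ)
    (hβ : 0 < β) (hρ : ρ = 2 * β)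
    (z y : P) (hy : lam + β • z + y = 0)
    (xp : E) (hxp : xp ∈ X) (xbp : F) (hxbp : xbp ∈ Xb)
    (zp yp : P)
    (hzp : zp = -((ρ / (ρ + β)) • (A xp + B xbp + ρ⁻¹ • y)) - (ρ + β)⁻¹ • lam)
    (hyp : yp = y + ρ • (A xp + B xbp + zp)) :
    augL A B f g lam ρ β xp xbp zp yp - augL A B f g lam ρ β xp xbp z y
      ≤ -(β / 2) * ‖zp - z‖ ^ 2 := by
  have hβ' : β ≠ 0 := ne_of_gt hβ
  have hlam : lam = -(β • z) - y := by linear_combination (norm := module) hy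
  set v := A xp + B xbp with hv
  have hzp' : zp = z + (-(2/3 : ℝ)) • (v + z) := by
    rw [hzp, hρ, hlam]
    match_scalars <;> field_simp <;> ring
  have hyp' : yp = y + (2*β/3 : ℝ) • (v + z) := by
    rw [hyp, hzp', hρ]
    match_scalars <;> ring
  have h1 : v + zp = (1/3 : ℝ) • (v + z) := by rw [hzp']; module
  have h2 : zp - z = (-(2/3) : ℝ) • (v + z) := by rw [hzp']; module
  have hw : (0:ℝ) ≤ ⟪v + z, v + z⟫ := real_inner_self_nonneg
  simp only [inner_add_left, inner_add_right] at hw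
  simp only [augL, ← hv, hzp', hyp']
  rw [show v + (z + (-(2/3 : ℝ)) • (v + z)) = (1/3 : ℝ) • (v + z) by module,
      show z + (-(2/3 : ℝ)) • (v + z) - z = (-(2/3) : ℝ) • (v + z) by module,
      hlam, hρ]
  simp only [← real_inner_self_eq_norm_sq, inner_add_left, inner_add_right,
    real_inner_smul_left, real_inner_smul_right, inner_neg_left, inner_neg_right,
    inner_sub_left, inner_sub_right]
  nlinarith [hw, mul_nonneg hβ.le hw, real_inner_comm v z, real_inner_comm v y, real_inner_comm z y,
    (real_inner_self_nonneg : (0:ℝ) ≤ ⟪v, v⟫), (real_inner_self_nonneg : (0:ℝ) ≤ ⟪z, z⟫)]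
end

section
/- Lower bound on the augmented Lagrangian (inequality (A1.3.5)): Assume β > 0, ρ = 2β, and y = −λ − βz. Then for any x ∈ X, x̄ ∈ X̄, z ∈ P, L(x, x̄, z; y) ≥ f(x) + g(x̄) − ⟨λ, Ax + Bx̄⟩ + (β/2)‖Ax + Bx̄‖² ≥ f(x) + g(x̄) − ‖λ‖²/(2β). In particular, if f is bounded below on X and g is bounded below on X̄, then L is bounded below on the set of points (x, x̄, z, y) with x ∈ X, x̄ ∈ X̄, y = −λ − βz. -/
open scoped RealInnerProductSpace

variable {E F P : Type*}
  [NormedAddCommGroup E] [InnerProductSpace ℝ E] [FiniteDimensional ℝ E]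
  [NormedAddCommGroup F] [InnerProductSpace ℝ F] [FiniteDimensional ℝ F]
  [NormedAddCommGroup P] [InnerProductSpace ℝ P] [FiniteDimensional ℝ P]

/-- Lower bound on the augmented Lagrangian (inequality (A1.3.5)), together with the
"in particular" boundedness-below conclusion. -/
theorem augL_lower_bound
    (A : E →L[ℝ] P) (B : F →L[ℝ] P) (f : E → ℝ) (g : F → ℝ)
    (X : Set E) (Xb : Set F) (lam : P) (ρ β : ℝ)
    (hβ : 0 < β) (hρ : ρ = 2 * β) :
    (∀ x ∈ X, ∀ xb ∈ Xb, ∀ z : P,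
      f x + g xb - ⟪lam, A x + B xb⟫ + β / 2 * ‖A x + B xb‖ ^ 2 ≤
        augL A B f g lam ρ β x xb z (-lam - β • z) ∧
      f x + g xb - ‖lam‖ ^ 2 / (2 * β) ≤
        f x + g xb - ⟪lam, A x + B xb⟫ + β / 2 * ‖A x + B xb‖ ^ 2) ∧
    ((∃ mf : ℝ, ∀ x ∈ X, mf ≤ f x) → (∃ mg : ℝ, ∀ xb ∈ Xb, mg ≤ g xb) →
      ∃ m : ℝ, ∀ x ∈ X, ∀ xb ∈ Xb, ∀ z : P,
        m ≤ augL A B f g lam ρ β x xb z (-lam - β • z)) := by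
  have key : ∀ x ∈ X, ∀ xb ∈ Xb, ∀ z : P,
      f x + g xb - ⟪lam, A x + B xb⟫ + β / 2 * ‖A x + B xb‖ ^ 2 ≤
        augL A B f g lam ρ β x xb z (-lam - β • z) ∧
      f x + g xb - ‖lam‖ ^ 2 / (2 * β) ≤
        f x + g xb - ⟪lam, A x + B xb⟫ + β / 2 * ‖A x + B xb‖ ^ 2 := by
    intro x hx xb hxb z
    set w : P := A x + B xb with hw
    constructor
    · unfold augL
      rw [← hw, hρ]
      have h1 : ⟪-lam - β • z, w + z⟫ = -⟪lam, w⟫ - ⟪lam, z⟫ - β * ⟪z, w⟫ - β * ⟪z, z⟫ := by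
        rw [inner_sub_left, inner_neg_left, inner_smul_left, inner_add_right,
          inner_add_right, inner_add_right]
        simp only [starRingEnd_apply, star_trivial]
        ring
      have h2 : ‖w + z‖ ^ 2 = ⟪w, w⟫ + 2 * ⟪w, z⟫ + ⟪z, z⟫ := by
        rw [← real_inner_self_eq_norm_sq, inner_add_add_self, real_inner_comm z w]
        ring
      have h3 : ‖w‖ ^ 2 = ⟪w, w⟫ := (real_inner_self_eq_norm_sq w).symm
      have h4 : ‖z‖ ^ 2 = ⟪z, z⟫ := (real_inner_self_eq_norm_sq z).symm
      have h5 : (0 : ℝ) ≤ ‖w + z‖ ^ 2 := by positivity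
      rw [h2] at h5
      have h6 : ⟪w, z⟫ = ⟪z, w⟫ := real_inner_comm z w
      rw [h1, h2, h3, h4]
      nlinarith [hβ, h5]
    · have h0 : (0 : ℝ) ≤ ‖β • w - lam‖ ^ 2 := by positivity
      have h1 : ‖β • w - lam‖ ^ 2 = β ^ 2 * ‖w‖ ^ 2 - 2 * β * ⟪lam, w⟫ + ‖lam‖ ^ 2 := by
        rw [← real_inner_self_eq_norm_sq, inner_sub_sub_self, inner_smul_left,
          inner_smul_right, inner_smul_left, inner_smul_right, real_inner_self_eq_norm_sq,
          real_inner_self_eq_norm_sq, real_inner_comm w lam]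
        simp only [starRingEnd_apply, star_trivial]
        ring
      rw [h1] at h0
      have h2 : ⟪lam, w⟫ - β / 2 * ‖w‖ ^ 2 ≤ ‖lam‖ ^ 2 / (2 * β) := by
        rw [le_div_iff₀ (by linarith : (0:ℝ) < 2 * β)]
        nlinarith [h0]
      linarith
  refine ⟨key, ?_⟩
  rintro ⟨mf, hmf⟩ ⟨mg, hmg⟩
  refine ⟨mf + mg - ‖lam‖ ^ 2 / (2 * β), fun x hx xb hxb z => ?_⟩
  obtain ⟨k1, k2⟩ := key x hx xb hxb z
  have := hmf x hx
  have := hmg xb hxb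
  linarith
end

section
/- Iteration complexity of the inner loop (core estimate of Lemma 3, from Appendix D): Assume g is convex, X̄ is convex, β > 0, ρ = 2β. Let (x_r, x̄_r, z_r, y_r), r = 0, 1, …, R, be a sequence with x_r ∈ X, x̄_r ∈ X̄, λ + βz_0 + y_0 = 0, each (x_{r+1}, x̄_{r+1}, z_{r+1}, y_{r+1}) produced from (x_r, x̄_r, z_r, y_r) by one ADMM inner iteration, and suppose L(x_0, x̄_0, z_0; y_0) ≤ L̄ and L(x_r, x̄_r, z_r; y_r) ≥ L̲ for all r ≤ R, where L̲ ≤ L̄ are real constants. Then there exists an index r < R with ‖Bx̄_{r+1} − Bx̄_r‖² + (1/2)‖z_{r+1} − z_r‖² ≤ (L̄ − L̲)/(βR). -/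
open scoped RealInnerProductSpace

variable {E F P : Type*}
  [NormedAddCommGroup E] [InnerProductSpace ℝ E] [FiniteDimensional ℝ E]
  [NormedAddCommGroup F] [InnerProductSpace ℝ F] [FiniteDimensional ℝ F]
  [NormedAddCommGroup P] [InnerProductSpace ℝ P] [FiniteDimensional ℝ P]

set_option linter.unusedSectionVars false

private lemma aux_nonneg {a b : ℝ} (ha : 0 ≤ a)
    (h : ∀ t : ℝ, 0 < t → t ≤ 1 → 0 ≤ b + t * a) : 0 ≤ b := by
  by_contra hb
  push_neg at hb
  have h2a : (0:ℝ) < 2 * (a + 1) := by linarith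
  have htpos : 0 < -b / (2 * (a + 1)) := div_pos (by linarith) h2a
  have ht0 : 0 < min 1 (-b / (2 * (a + 1))) := lt_min one_pos htpos
  have h3 := h _ ht0 (min_le_left _ _)
  have h4 : min 1 (-b / (2 * (a + 1))) ≤ -b / (2 * (a + 1)) := min_le_right _ _
  have h5 : min 1 (-b / (2 * (a + 1))) * a ≤ (-b / (2 * (a + 1))) * a :=
    mul_le_mul_of_nonneg_right h4 ha
  have h6 : (-b / (2 * (a + 1))) * a < -b := by
    rw [div_mul_eq_mul_div, div_lt_iff₀ h2a]
    nlinarith [mul_pos (show (0:ℝ) < -b by linarith) (show (0:ℝ) < a + 2 by linarith)]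
  linarith

private lemma minB_strong (g : F → ℝ) (hg : ConvexOn ℝ Set.univ g)
    (Xb : Set F) (hXb : Convex ℝ Xb) (B : F →L[ℝ] P) (c : P) (ρ : ℝ) (hρ : 0 < ρ)
    (xb xbp : F) (hxb : xb ∈ Xb) (hxbp : xbp ∈ Xb)
    (hmin : IsMinOn (fun u : F => g u + ρ/2 * ‖c + B u‖^2) Xb xbp) :
    g xbp + ρ/2 * ‖c + B xbp‖^2 + ρ/2 * ‖B xb - B xbp‖^2 ≤ g xb + ρ/2 * ‖c + B xb‖^2 := by
  have hG : 0 ≤ (g xb - g xbp + ρ * ⟪c + B xbp, B xb - B xbp⟫) := by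
    refine aux_nonneg (a := ρ/2 * ‖B xb - B xbp‖^2)
      (mul_nonneg (by linarith) (sq_nonneg _)) (fun t ht0 ht1 => ?_)
    have hmem : (1-t) • xbp + t • xb ∈ Xb := hXb hxbp hxb (by linarith) ht0.le (by ring)
    have hgt := hg.2 (Set.mem_univ xbp) (Set.mem_univ xb)
      (show (0:ℝ) ≤ 1 - t by linarith) ht0.le (by ring)
    have hvec : c + B ((1-t) • xbp + t • xb) = (c + B xbp) + t • (B xb - B xbp) := by
      simp only [map_add, map_smul]
      module
    have hm := isMinOn_iff.mp hmin _ hmem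
    have hq : ‖(c + B xbp) + t • (B xb - B xbp)‖^2
        = ‖c + B xbp‖^2 + 2 * (t * ⟪c + B xbp, B xb - B xbp⟫) + t^2 * ‖B xb - B xbp‖^2 := by
      rw [norm_add_sq_real, real_inner_smul_right, norm_smul, Real.norm_eq_abs, mul_pow, sq_abs]
    rw [hvec, hq] at hm
    simp only [smul_eq_mul] at hgt
    have key : 0 ≤ t * ((g xb - g xbp + ρ * ⟪c + B xbp, B xb - B xbp⟫)
        + t * (ρ/2 * ‖B xb - B xbp‖^2)) := by nlinarith [hm, hgt]
    have := (mul_nonneg_iff_of_pos_left ht0).mp key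
    linarith
  have hx1 : c + B xb = (c + B xbp) + (B xb - B xbp) := by abel
  have hq2 : ‖(c + B xbp) + (B xb - B xbp)‖^2
      = ‖c + B xbp‖^2 + 2 * ⟪c + B xbp, B xb - B xbp⟫ + ‖B xb - B xbp‖^2 :=
    norm_add_sq_real _ _
  rw [hx1, hq2]
  nlinarith [hG]

private lemma admm_step_descent
    (A : E →L[ℝ] P) (B : F →L[ℝ] P) (f : E → ℝ) (g : F → ℝ)
    (X : Set E) (Xb : Set F) (lam : P) (ρ β : ℝ)
    (hg : ConvexOn ℝ Set.univ g) (hXb : Convex ℝ Xb)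
    (hβ : 0 < β) (hρ : ρ = 2 * β)
    (x : E) (xb : F) (z y : P) (xp : E) (xbp : F) (zp yp : P)
    (hx : x ∈ X) (hxb : xb ∈ Xb)
    (hinv : lam + β • z + y = 0)
    (hs : ADMMStep A B f g X Xb lam ρ β xb z y xp xbp zp yp) :
    lam + β • zp + yp = 0 ∧
    augL A B f g lam ρ β xp xbp zp yp ≤
      augL A B f g lam ρ β x xb z y - β * (‖B xbp - B xb‖^2 + ‖zp - z‖^2) := by
  have hρpos : 0 < ρ := by rw [hρ]; linarith
  have hρ0 : ρ ≠ 0 := ne_of_gt hρpos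
  have hρβ : ρ + β ≠ 0 := by positivity
  obtain ⟨hxpX, hminA, hxbpXb, hminB', hzp, hyp⟩ := hs
  have hiden : ∀ v w : P, ⟪w, v⟫ + ρ/2 * ‖v‖^2
      = ρ/2 * ‖v + ρ⁻¹ • w‖^2 - (2*ρ)⁻¹ * ‖w‖^2 := by
    intro v w
    have h := norm_add_sq_real v (ρ⁻¹ • w)
    rw [real_inner_smul_right, norm_smul, Real.norm_eq_abs,
      abs_of_pos (inv_pos.mpr hρpos), mul_pow] at h
    rw [real_inner_comm, h]
    field_simp
    ring
  -- step A
  have keyx : ∀ x' : E, augL A B f g lam ρ β x' xb z y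
      = (f x' + ρ/2 * ‖A x' + B xb + z + ρ⁻¹ • y‖^2)
        + (g xb + ⟪lam, z⟫ + β/2 * ‖z‖^2 - (2*ρ)⁻¹ * ‖y‖^2) := by
    intro x'
    have h := hiden (A x' + B xb + z) y
    unfold augL
    linarith
  have h1 : augL A B f g lam ρ β xp xb z y ≤ augL A B f g lam ρ β x xb z y := by
    have hm := isMinOn_iff.mp hminA x hx
    rw [keyx xp, keyx x]
    linarith
  -- step B
  have keyxb : ∀ u : F, augL A B f g lam ρ β xp u z y
      = (g u + ρ/2 * ‖(A xp + z + ρ⁻¹ • y) + B u‖^2)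
        + (f xp + ⟪lam, z⟫ + β/2 * ‖z‖^2 - (2*ρ)⁻¹ * ‖y‖^2) := by
    intro u
    have h := hiden (A xp + B u + z) y
    have hrw : (A xp + z + ρ⁻¹ • y) + B u = A xp + B u + z + ρ⁻¹ • y := by abel
    unfold augL
    rw [hrw]
    linarith
  have hminB2 : IsMinOn (fun u : F => g u + ρ/2 * ‖(A xp + z + ρ⁻¹ • y) + B u‖^2) Xb xbp := by
    have hfe : (fun u : F => g u + ρ/2 * ‖(A xp + z + ρ⁻¹ • y) + B u‖^2)
        = (fun xb' : F => g xb' + ρ / 2 * ‖A xp + B xb' + z + ρ⁻¹ • y‖ ^ 2) := by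
      funext u
      have hrw : (A xp + z + ρ⁻¹ • y) + B u = A xp + B u + z + ρ⁻¹ • y := by abel
      rw [hrw]
    rw [hfe]
    exact hminB'
  have h2' := minB_strong g hg Xb hXb B (A xp + z + ρ⁻¹ • y) ρ hρpos xb xbp hxb hxbpXb hminB2
  have h2 : augL A B f g lam ρ β xp xbp z y
      ≤ augL A B f g lam ρ β xp xb z y - ρ/2 * ‖B xb - B xbp‖^2 := by
    rw [keyxb xbp, keyxb xb]
    linarith
  -- z-update
  have hzp' : (ρ + β) • zp = -(ρ • (A xp + B xbp) + y + lam) := by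
    rw [hzp]
    match_scalars <;> · field_simp
                        try ring
  have hinvp : lam + β • zp + yp = 0 := by
    rw [hyp]
    have hrw : lam + β • zp + (y + ρ • (A xp + B xbp + zp))
        = (ρ + β) • zp + (ρ • (A xp + B xbp) + y + lam) := by
      rw [add_smul, smul_add]
      abel
    rw [hrw, hzp']
    abel
  have h3 : augL A B f g lam ρ β xp xbp z y - augL A B f g lam ρ β xp xbp zp y
      = (ρ+β)/2 * ‖z - zp‖^2 := by
    unfold augL
    have e1 := norm_add_sq_real (A xp + B xbp) z
    have e2 := norm_add_sq_real (A xp + B xbp) zp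
    have e3 := norm_sub_sq_real z zp
    have e4 : ⟪y, A xp + B xbp + z⟫ = ⟪y, A xp + B xbp⟫ + ⟪y, z⟫ := inner_add_right _ _ _
    have e5 : ⟪y, A xp + B xbp + zp⟫ = ⟪y, A xp + B xbp⟫ + ⟪y, zp⟫ := inner_add_right _ _ _
    have e6 : ρ * ⟪A xp + B xbp, z⟫ + ⟪y, z⟫ + ⟪lam, z⟫ = -((ρ+β) * ⟪zp, z⟫) := by
      have h := congrArg (fun w : P => ⟪w, z⟫) hzp'
      simp only [inner_neg_left, inner_add_left, real_inner_smul_left] at h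
      have hsplit : ⟪A xp + B xbp, z⟫ = ⟪A xp, z⟫ + ⟪B xbp, z⟫ := inner_add_left _ _ _
      linear_combination ρ * hsplit + h
    have e7 : ρ * ⟪A xp + B xbp, zp⟫ + ⟪y, zp⟫ + ⟪lam, zp⟫ = -((ρ+β) * ‖zp‖^2) := by
      have h := congrArg (fun w : P => ⟪w, zp⟫) hzp'
      simp only [inner_neg_left, inner_add_left, real_inner_smul_left,
        real_inner_self_eq_norm_sq] at h
      have hsplit : ⟪A xp + B xbp, zp⟫ = ⟪A xp, zp⟫ + ⟪B xbp, zp⟫ := inner_add_left _ _ _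
      linear_combination ρ * hsplit + h
    have e8 : ⟪zp, z⟫ = ⟪z, zp⟫ := real_inner_comm _ _
    rw [e4, e5, e1, e2, e3]
    linear_combination e6 - e7 - (ρ+β) * e8
  -- y-update
  have dy : yp - y = β • (z - zp) := by
    rw [eq_neg_of_add_eq_zero_right hinvp, eq_neg_of_add_eq_zero_right hinv, smul_sub]
    abel
  have hczp : ρ • (A xp + B xbp + zp) = β • (z - zp) := by
    rw [← dy, hyp]
    abel
  have hcz : A xp + B xbp + zp = (β/ρ) • (z - zp) := by
    have h := congrArg (fun v : P => ρ⁻¹ • v) hczp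
    simp only [smul_smul] at h
    rw [inv_mul_cancel₀ hρ0, one_smul] at h
    rw [h, ← div_eq_inv_mul]
  have h4 : augL A B f g lam ρ β xp xbp zp yp - augL A B f g lam ρ β xp xbp zp y
      = β^2/ρ * ‖z - zp‖^2 := by
    unfold augL
    have e : ⟪yp, A xp + B xbp + zp⟫ - ⟪y, A xp + B xbp + zp⟫ = β^2/ρ * ‖z - zp‖^2 := by
      rw [← inner_sub_left, dy, hcz, real_inner_smul_left, real_inner_smul_right,
        real_inner_self_eq_norm_sq]
      field_simp
    linarith
  -- combine
  refine ⟨hinvp, ?_⟩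
  have hβ0 : β ≠ 0 := ne_of_gt hβ
  have hw : ‖B xbp - B xb‖^2 = ‖B xb - B xbp‖^2 := by rw [norm_sub_rev]
  have hzn : ‖zp - z‖^2 = ‖z - zp‖^2 := by rw [norm_sub_rev]
  have hc1 : (ρ+β)/2 * ‖z - zp‖^2 - β^2/ρ * ‖z - zp‖^2 = β * ‖z - zp‖^2 := by
    rw [hρ]; field_simp; ring
  have hc2 : ρ/2 * ‖B xb - B xbp‖^2 = β * ‖B xb - B xbp‖^2 := by rw [hρ]; ring
  have hdistr : β * (‖B xbp - B xb‖^2 + ‖zp - z‖^2)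
      = β * ‖B xb - B xbp‖^2 + β * ‖z - zp‖^2 := by rw [hw, hzn]; ring
  linarith [h1, h2, h3, h4, hc1, hc2, hdistr]

/-- Iteration complexity of the inner loop (core estimate of Lemma 3, Appendix D). -/
theorem admm_inner_loop_complexity
    (A : E →L[ℝ] P) (B : F →L[ℝ] P) (f : E → ℝ) (g : F → ℝ)
    (X : Set E) (Xb : Set F) (lam : P) (ρ β : ℝ)
    (hg : ConvexOn ℝ Set.univ g) (hXb : Convex ℝ Xb)
    (hβ : 0 < β) (hρ : ρ = 2 * β)
    (R : ℕ) (hR : 0 < R)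
    (x : ℕ → E) (xb : ℕ → F) (z y : ℕ → P)
    (hxX : ∀ r ≤ R, x r ∈ X) (hxbXb : ∀ r ≤ R, xb r ∈ Xb)
    (hy0 : lam + β • z 0 + y 0 = 0)
    (hstep : ∀ r < R, ADMMStep A B f g X Xb lam ρ β
      (xb r) (z r) (y r) (x (r + 1)) (xb (r + 1)) (z (r + 1)) (y (r + 1)))
    (Lbar Llow : ℝ) (hLle : Llow ≤ Lbar)
    (hupper : augL A B f g lam ρ β (x 0) (xb 0) (z 0) (y 0) ≤ Lbar)
    (hlower : ∀ r ≤ R, Llow ≤ augL A B f g lam ρ β (x r) (xb r) (z r) (y r)) :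
    ∃ r < R, ‖B (xb (r + 1)) - B (xb r)‖ ^ 2 + 1 / 2 * ‖z (r + 1) - z r‖ ^ 2 ≤
      (Lbar - Llow) / (β * R) := by
  have hinv : ∀ r, r ≤ R → lam + β • z r + y r = 0 := by
    intro r
    induction r with
    | zero => intro _; exact hy0
    | succ n ih =>
      intro h
      have hn : n < R := Nat.lt_of_succ_le h
      exact (admm_step_descent A B f g X Xb lam ρ β hg hXb hβ hρ
        (x n) (xb n) (z n) (y n) (x (n+1)) (xb (n+1)) (z (n+1)) (y (n+1))
        (hxX n hn.le) (hxbXb n hn.le) (ih hn.le) (hstep n hn)).1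
  have hdec : ∀ r, r < R →
      augL A B f g lam ρ β (x (r+1)) (xb (r+1)) (z (r+1)) (y (r+1))
        ≤ augL A B f g lam ρ β (x r) (xb r) (z r) (y r)
          - β * (‖B (xb (r+1)) - B (xb r)‖^2 + ‖z (r+1) - z r‖^2) := fun r hr =>
    (admm_step_descent A B f g X Xb lam ρ β hg hXb hβ hρ
      (x r) (xb r) (z r) (y r) (x (r+1)) (xb (r+1)) (z (r+1)) (y (r+1))
      (hxX r hr.le) (hxbXb r hr.le) (hinv r hr.le) (hstep r hr)).2
  have hsum : ∀ n, n ≤ R →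
      augL A B f g lam ρ β (x n) (xb n) (z n) (y n)
        + β * ∑ r ∈ Finset.range n, (‖B (xb (r+1)) - B (xb r)‖^2 + ‖z (r+1) - z r‖^2)
        ≤ augL A B f g lam ρ β (x 0) (xb 0) (z 0) (y 0) := by
    intro n
    induction n with
    | zero => intro _; simp
    | succ m ih =>
      intro h
      have hm : m < R := Nat.lt_of_succ_le h
      have h1 := hdec m hm
      have h2 := ih hm.le
      rw [Finset.sum_range_succ, mul_add]
      linarith
  have hfin := hsum R le_rfl
  have hLR := hlower R le_rfl
  have hsumle : β * ∑ r ∈ Finset.range R, (‖B (xb (r+1)) - B (xb r)‖^2 + ‖z (r+1) - z r‖^2)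
      ≤ Lbar - Llow := by linarith
  by_contra hcon
  push_neg at hcon
  have hRpos : (0:ℝ) < R := Nat.cast_pos.mpr hR
  have hsum2 : (R:ℝ) * ((Lbar - Llow)/(β * R))
      < ∑ r ∈ Finset.range R, (‖B (xb (r+1)) - B (xb r)‖^2 + 1/2 * ‖z (r+1) - z r‖^2) := by
    calc (R:ℝ) * ((Lbar - Llow)/(β*R))
        = ∑ _r ∈ Finset.range R, (Lbar - Llow)/(β*R) := by
          rw [Finset.sum_const, Finset.card_range, nsmul_eq_mul]
      _ < _ := Finset.sum_lt_sum_of_nonempty (Finset.nonempty_range_iff.mpr hR.ne')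
          (fun i hi => hcon i (Finset.mem_range.mp hi))
  have hsum3 : ∑ r ∈ Finset.range R, (‖B (xb (r+1)) - B (xb r)‖^2 + 1/2 * ‖z (r+1) - z r‖^2)
      ≤ ∑ r ∈ Finset.range R, (‖B (xb (r+1)) - B (xb r)‖^2 + ‖z (r+1) - z r‖^2) :=
    Finset.sum_le_sum (fun i _ => by nlinarith [sq_nonneg ‖z (i+1) - z i‖])
  have heq : (R:ℝ) * ((Lbar - Llow)/(β*R)) = (Lbar - Llow)/β := by
    field_simp
  have hfinal : ∑ r ∈ Finset.range R, (‖B (xb (r+1)) - B (xb r)‖^2 + ‖z (r+1) - z r‖^2)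
      ≤ (Lbar - Llow)/β := (le_div_iff₀ hβ).mpr (by linarith)
  linarith
end

section
/- Vanishing of iterate differences under safeguarded Anderson acceleration (Lemma 6, final part): Let β > 0 and c ≥ 0 be constants, let (a_r) be a convergent sequence of real numbers, let (u_r) and (v_r) be sequences in finite-dimensional real normed spaces, and let S ⊆ ℕ be a set of indices. Suppose that for every r ∉ S one has a_{r+1} ≤ a_r − β‖u_r‖² − (β/2)‖v_r‖², and for every r ∈ S one has ‖u_r‖² + ‖v_r‖² ≤ c/√(1 + j_r), where j_r denotes the number of elements of S strictly less than r. Then u_r → 0 and v_r → 0 as r → ∞. -/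
set_option maxHeartbeats 800000


/-- Vanishing of iterate differences under safeguarded Anderson acceleration
(Lemma 6, final part). Here `(S ∩ Set.Iio r).ncard` is the number of accepted
acceleration steps strictly before `r`. -/
theorem iterate_differences_vanish
    {U V : Type*} [NormedAddCommGroup U] [NormedSpace ℝ U] [FiniteDimensional ℝ U]
    [NormedAddCommGroup V] [NormedSpace ℝ V] [FiniteDimensional ℝ V]
    (β c : ℝ) (hβ : 0 < β) (hc : 0 ≤ c)
    (a : ℕ → ℝ) (l : ℝ) (ha : Filter.Tendsto a Filter.atTop (nhds l))
    (u : ℕ → U) (v : ℕ → V) (S : Set ℕ)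
    (hdec : ∀ r : ℕ, r ∉ S → a (r + 1) ≤ a r - β * ‖u r‖ ^ 2 - β / 2 * ‖v r‖ ^ 2)
    (hacc : ∀ r ∈ S, ‖u r‖ ^ 2 + ‖v r‖ ^ 2 ≤
      c / Real.sqrt (1 + ((S ∩ Set.Iio r).ncard : ℝ))) :
    Filter.Tendsto u Filter.atTop (nhds 0) ∧ Filter.Tendsto v Filter.atTop (nhds 0) := by
  -- the decrement tends to 0
  have hd : Filter.Tendsto (fun r => a r - a (r + 1)) Filter.atTop (nhds 0) := by
    have h2 : Filter.Tendsto (fun r => a (r + 1)) Filter.atTop (nhds l) :=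
      ha.comp (Filter.tendsto_add_atTop_nat 1)
    simpa using ha.sub h2
  have hd' : Filter.Tendsto (fun r => 2 / β * (a r - a (r + 1))) Filter.atTop (nhds 0) := by
    simpa using hd.const_mul (2 / β)
  set f : ℕ → ℝ := fun r => ‖u r‖ ^ 2 + ‖v r‖ ^ 2 with hfdef
  have hf0 : ∀ r, 0 ≤ f r := fun r => by positivity
  have hfle : ∀ r ∉ S, f r ≤ 2 / β * (a r - a (r + 1)) := by
    intro r hr
    have := hdec r hr
    have hu : (0:ℝ) ≤ ‖u r‖ ^ 2 := by positivity
    have hv : (0:ℝ) ≤ ‖v r‖ ^ 2 := by positivity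
    simp only [hfdef]
    rw [div_mul_eq_mul_div, le_div_iff₀ hβ]
    nlinarith
  have hftends : Filter.Tendsto f Filter.atTop (nhds 0) := by
    by_cases hS : S.Infinite
    · -- j_r → ∞
      have hj : Filter.Tendsto (fun r => ((S ∩ Set.Iio r).ncard : ℝ))
          Filter.atTop Filter.atTop := by
        apply tendsto_natCast_atTop_atTop.comp
        rw [Filter.tendsto_atTop_atTop]
        intro b
        obtain ⟨T, hTsub, hTcard⟩ := hS.exists_subset_card_eq b
        refine ⟨T.sup id + 1, fun r hr => ?_⟩
        have hsub : (T : Set ℕ) ⊆ S ∩ Set.Iio r := by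
          intro x hx
          refine ⟨hTsub hx, ?_⟩
          have : x ≤ T.sup id := Finset.le_sup (f := id) hx
          simp only [Set.mem_Iio]; omega
        calc b = (T : Set ℕ).ncard := by simp [hTcard]
          _ ≤ (S ∩ Set.Iio r).ncard :=
            Set.ncard_le_ncard hsub ((Set.finite_Iio r).inter_of_right _)
      have hg : Filter.Tendsto (fun r => c / Real.sqrt (1 + ((S ∩ Set.Iio r).ncard : ℝ)))
          Filter.atTop (nhds 0) := by
        apply Filter.Tendsto.div_atTop tendsto_const_nhds
        rw [Filter.tendsto_atTop_atTop]
        intro b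
        obtain ⟨N, hN⟩ := (Filter.tendsto_atTop_atTop.1 hj) (b ^ 2)
        refine ⟨N, fun r hr => ?_⟩
        have h1 : b ^ 2 ≤ 1 + ((S ∩ Set.Iio r).ncard : ℝ) := by
          have := hN r hr; linarith
        calc b ≤ |b| := le_abs_self b
          _ = Real.sqrt (b ^ 2) := (Real.sqrt_sq_eq_abs b).symm
          _ ≤ _ := Real.sqrt_le_sqrt h1
      have hmax : Filter.Tendsto
          (fun r => max (2 / β * (a r - a (r + 1)))
            (c / Real.sqrt (1 + ((S ∩ Set.Iio r).ncard : ℝ)))) Filter.atTop (nhds 0) := by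
        simpa using hd'.max hg
      refine squeeze_zero hf0 (fun r => ?_) hmax
      by_cases hr : r ∈ S
      · exact le_max_of_le_right (hacc r hr)
      · exact le_max_of_le_left (hfle r hr)
    · -- S finite: eventually r ∉ S
      rw [Set.not_infinite] at hS
      obtain ⟨N, hN⟩ : ∃ N, ∀ r ≥ N, r ∉ S := by
        rcases Set.eq_empty_or_nonempty S with h | h
        · exact ⟨0, fun r _ => by simp [h]⟩
        · obtain ⟨m, hm⟩ := hS.bddAbove
          exact ⟨m + 1, fun r hr hrS => by have := hm hrS; omega⟩
      refine squeeze_zero' (Filter.Eventually.of_forall hf0) ?_ hd'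
      filter_upwards [Filter.eventually_ge_atTop N] with r hr
      exact hfle r (hN r hr)
  -- conclude for u and v
  have hu2 : Filter.Tendsto (fun r => ‖u r‖ ^ 2) Filter.atTop (nhds 0) :=
    squeeze_zero (fun r => by positivity)
      (fun r => le_add_of_nonneg_right (by positivity)) hftends
  have hv2 : Filter.Tendsto (fun r => ‖v r‖ ^ 2) Filter.atTop (nhds 0) :=
    squeeze_zero (fun r => by positivity)
      (fun r => le_add_of_nonneg_left (by positivity)) hftends
  constructor
  · rw [tendsto_zero_iff_norm_tendsto_zero]
    have h := (Real.continuous_sqrt.tendsto 0).comp hu2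
    simp only [Function.comp_def, Real.sqrt_sq (norm_nonneg _), Real.sqrt_zero] at h
    exact h
  · rw [tendsto_zero_iff_norm_tendsto_zero]
    have h := (Real.continuous_sqrt.tendsto 0).comp hv2
    simp only [Function.comp_def, Real.sqrt_sq (norm_nonneg _), Real.sqrt_zero] at h
    exact h
end

section
/- Inverse of the multi-secant Jacobian estimate (equations (11)–(12)): Let Δw and Δh be real N × m matrices and suppose both Δwᵀ Δw and Δwᵀ Δh are invertible m × m matrices. Then the matrix H = I + (Δh − Δw)(Δwᵀ Δw)^{−1} Δwᵀ is invertible, and its inverse is H^{−1} = I + (Δw − Δh)(Δwᵀ Δh)^{−1} Δwᵀ. -/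
open Matrix

/-- Inverse of the multi-secant Jacobian estimate (equations (11)–(12)):
if `Δwᵀ Δw` and `Δwᵀ Δh` are invertible, then `H = I + (Δh − Δw)(Δwᵀ Δw)⁻¹ Δwᵀ` is
invertible with `H⁻¹ = I + (Δw − Δh)(Δwᵀ Δh)⁻¹ Δwᵀ`. -/

theorem multisecant_jacobian_inverse (N m : ℕ)
    (Δw Δh : Matrix (Fin N) (Fin m) ℝ)
    (h1 : IsUnit (Δwᵀ * Δw).det) (h2 : IsUnit (Δwᵀ * Δh).det) :
    IsUnit (1 + (Δh - Δw) * (Δwᵀ * Δw)⁻¹ * Δwᵀ : Matrix (Fin N) (Fin N) ℝ).det ∧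
    (1 + (Δh - Δw) * (Δwᵀ * Δw)⁻¹ * Δwᵀ : Matrix (Fin N) (Fin N) ℝ)⁻¹ =
      1 + (Δw - Δh) * (Δwᵀ * Δh)⁻¹ * Δwᵀ := by
  have hP : (Δwᵀ * Δw)⁻¹ * (Δwᵀ * Δw) = 1 := nonsing_inv_mul _ h1
  have hQ : (Δwᵀ * Δh) * (Δwᵀ * Δh)⁻¹ = 1 := mul_nonsing_inv _ h2
  have hD : Δw - Δh = -(Δh - Δw) := by rw [neg_sub]
  have t : (Δh - Δw) * (Δwᵀ * Δw)⁻¹ * Δwᵀ * ((Δh - Δw) * (Δwᵀ * Δh)⁻¹ * Δwᵀ)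
      = (Δh - Δw) * (Δwᵀ * Δw)⁻¹ * Δwᵀ - (Δh - Δw) * (Δwᵀ * Δh)⁻¹ * Δwᵀ := by
    have hWC : Δwᵀ * (Δh - Δw) = Δwᵀ * Δh - Δwᵀ * Δw := Matrix.mul_sub _ _ _
    calc (Δh - Δw) * (Δwᵀ * Δw)⁻¹ * Δwᵀ * ((Δh - Δw) * (Δwᵀ * Δh)⁻¹ * Δwᵀ)
        = (Δh - Δw) * (Δwᵀ * Δw)⁻¹ * (Δwᵀ * (Δh - Δw)) * ((Δwᵀ * Δh)⁻¹ * Δwᵀ) := by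
          simp only [Matrix.mul_assoc]
      _ = (Δh - Δw) * (Δwᵀ * Δw)⁻¹ * (Δwᵀ * Δh - Δwᵀ * Δw) * ((Δwᵀ * Δh)⁻¹ * Δwᵀ) := by
          rw [hWC]
      _ = (Δh - Δw) * (Δwᵀ * Δw)⁻¹ * ((Δwᵀ * Δh) * ((Δwᵀ * Δh)⁻¹ * Δwᵀ))
          - (Δh - Δw) * ((Δwᵀ * Δw)⁻¹ * (Δwᵀ * Δw)) * ((Δwᵀ * Δh)⁻¹ * Δwᵀ) := by
          rw [Matrix.mul_sub, Matrix.sub_mul]; simp only [Matrix.mul_assoc]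
      _ = (Δh - Δw) * (Δwᵀ * Δw)⁻¹ * Δwᵀ - (Δh - Δw) * (Δwᵀ * Δh)⁻¹ * Δwᵀ := by
          rw [hP, ← Matrix.mul_assoc (Δwᵀ * Δh), hQ, Matrix.one_mul, Matrix.mul_one,
            ← Matrix.mul_assoc]
  have key : (1 + (Δh - Δw) * (Δwᵀ * Δw)⁻¹ * Δwᵀ) *
      (1 + (Δw - Δh) * (Δwᵀ * Δh)⁻¹ * Δwᵀ) = 1 := by
    rw [hD, Matrix.neg_mul, Matrix.neg_mul, ← sub_eq_add_neg,
      Matrix.mul_sub, Matrix.mul_one, Matrix.add_mul, Matrix.one_mul, t]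
    abel
  exact ⟨Matrix.isUnit_det_of_right_inverse key, Matrix.inv_eq_right_inv key⟩
end
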